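/- Let k be a commutative ring, T a finite lattice, n ≥ 0, and B = (b_0, …, b_{n-1}) a strictly increasing n-tuple with 0̂ ≤ b_0 < b_1 < ⋯ < b_{n-1} < b_n := 1̂ in T. Let n̄ = {0 < 1 < ⋯ < n}, let π^B : T → n̄ be defined by π^B(t) = the least h with t ≤ b_h, and for each n-tuple A = (a_1, …, a_n) with a_h ∈ [b_{h-1}, b_h] for all h, let j_A^B : n̄ → T be defined by j_A^B(0) = 0̂ and j_A^B(h) = a_h for h ≥ 1, and set μ(B,A) = ∏_{h=1}^n μ_T(b_{h-1}, a_h), where μ_T is the Möbius function of T. For Y ⊆ {1,…,n}, let ρ_Y : n̄ → n̄ be given by ρ_Y(0) = 0, ρ_Y(h) = h if h ∈ Y, and ρ_Y(h) = h-1 if h ∉ Y. Then: (i) in the free k-module on the set of join-preserving maps n̄ → n̄, ∑_A μ(B,A)·(π^B ∘ j_A^B) = ∑_{Y ⊆ {1,…,n}} (-1)^{|Y|}·ρ_Y, the first sum running over all n-tuples A as above; (ii) the element (-1)^n ∑_A μ(B,A)·(j_A^B ∘ π^B) of the monoid algebra k[M], where M is the monoid of join-preserving maps T → T under composition, is idempotent.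 -/

import Mathlib

open scoped Classical

/-- `π^B : T → {0,…,n}`, sending `t` to the least `h` with `t ≤ b_h`
(where `b_n = 1̂`). -/
noncomputable def piB {T : Type*} [Lattice T] [Fintype T] [BoundedOrder T] {n : ℕ}
    (b : Fin (n + 1) → T) (htop : b (Fin.last n) = ⊤) (t : T) : Fin (n + 1) :=
  (Finset.univ.filter fun h => t ≤ b h).min'
    ⟨Fin.last n, Finset.mem_filter.2 ⟨Finset.mem_univ _, by rw [htop]; exact le_top⟩⟩

/-- `j_A^B : {0,…,n} → T`, sending `0` to `0̂` and `h ≥ 1` to `a_h`. -/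
def jAB {T : Type*} [Lattice T] [OrderBot T] {n : ℕ} (a : Fin n → T) :
    Fin (n + 1) → T :=
  fun h => Fin.cases ⊥ a h

/-- `ρ_Y : {0,…,n} → {0,…,n}` for `Y ⊆ {1,…,n}`: `ρ_Y(0) = 0`, `ρ_Y(h) = h` if `h ∈ Y`
and `ρ_Y(h) = h - 1` otherwise. Here `h ∈ {1,…,n}` is represented as `i.succ` with
`i : Fin n`, so that `h - 1 = i.castSucc`. -/
def rhoY {n : ℕ} (Y : Finset (Fin n)) : Fin (n + 1) → Fin (n + 1) :=
  fun h => Fin.cases 0 (fun i => if i ∈ Y then i.succ else i.castSucc) h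

/-- `μ(B,A) = ∏_{h=1}^n μ_T(b_{h-1}, a_h)`. -/
def muBA {T : Type*} [Lattice T] [Fintype T] {n : ℕ} (μ : T → T → ℤ)
    (b : Fin (n + 1) → T) (a : Fin n → T) : ℤ :=
  ∏ i : Fin n, μ (b i.castSucc) (a i)

/-!
`π^B ∘ j_A^B` is `ρ_Y` for `Y` the set of `h` with `a_h ≠ b_{h-1}`, and `μ(B,A)` is a product
over the coordinates of `A`. So the tuples `A` with a given `Y` contribute
`∏_{h ∈ Y} ∑_{b_{h-1} < u ≤ b_h} μ(b_{h-1}, u) = (-1)^{|Y|}`, which is (i). Here the recursion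
`∑_{s ≤ u ≤ t} μ(s, u) = 0` over the upper argument follows from the given one over the lower
argument, because both say that `μ` inverts `ζ` in the incidence algebra.

For (ii), let `S = ∑_A μ(B,A) j_A^B π^B`. Expanding `S²` and applying (i) to the middle factors
gives `S² = ∑_Y (-1)^{|Y|} ∑_A μ(B,A) j_A^B ρ_Y π^B`. If `Y ≠ {1,…,n}` and `i` is the largest
index outside `Y`, then `i` is not a value of `ρ_Y`, so `j_A^B ρ_Y` does not depend on `a_i`, and
the inner sum vanishes since `∑_{u ∈ [b_{i-1}, b_i]} μ(b_{i-1}, u) = 0`. Only the term with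
`ρ_{{1,…,n}} = id` survives, so `S² = (-1)^n S`.
-/

open Finset Function

namespace IncidenceAlgebra

variable {𝕜 α : Type*} [Ring 𝕜] [PartialOrder α] [LocallyFiniteOrder α] [DecidableEq α]

theorem sum_Icc_left_eq_zero_of_sum_Icc_right (μ : α → α → 𝕜) (hμ1 : ∀ t, μ t t = 1)
    (hμ2 : ∀ s t, s < t → ∑ u ∈ Icc s t, μ u t = 0) {s t : α} (hst : s < t) :
    ∑ u ∈ Icc s t, μ s u = 0 := by
  let f : IncidenceAlgebra 𝕜 α := ⟨fun a b => if a ≤ b then μ a b else 0, fun _ _ h => if_neg h⟩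
  have hzeta : zeta 𝕜 * f = 1 := by
    ext a b hab
    rw [mul_apply, one_apply]
    rcases hab.eq_or_lt with rfl | hlt
    · simp [f, hμ1]
    · rw [if_neg hlt.ne, ← hμ2 a b hlt]
      refine sum_congr rfl fun u hu => ?_
      simp [f, (mem_Icc.1 hu).1, (mem_Icc.1 hu).2]
  have hf : mu 𝕜 = f := left_inv_eq_right_inv (mu_mul_zeta 𝕜 α) hzeta
  calc ∑ u ∈ Icc s t, μ s u = ∑ u ∈ Icc s t, mu 𝕜 s u :=
        sum_congr rfl fun u hu => by simp [hf, f, (mem_Icc.1 hu).1]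
    _ = 0 := by rw [sum_Icc_mu_right, if_neg hst.ne]

end IncidenceAlgebra

namespace Finset

variable {ι α R M : Type*} [Fintype ι] [DecidableEq ι] [DecidableEq α] [CommSemiring R]
  [AddCommMonoid M] [Module R M]

theorem sum_piFinset_prod_smul_filter_ne (s : ι → Finset α) (c : ι → α) (hc : ∀ i, c i ∈ s i)
    (w : ι → α → R) (G : Finset ι → M) :
    ∑ a ∈ Fintype.piFinset s, (∏ i, w i (a i)) • G (univ.filter fun i => a i ≠ c i) =
      ∑ Y : Finset ι,
        (∏ i, if i ∈ Y then ∑ u ∈ (s i).erase (c i), w i u else w i (c i)) • G Y := by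
  rw [← sum_fiberwise (Fintype.piFinset s) (fun a => univ.filter fun i => a i ≠ c i)
    fun a => (∏ i, w i (a i)) • G (univ.filter fun i => a i ≠ c i)]
  refine sum_congr rfl fun Y _ => ?_
  have hfiber : (Fintype.piFinset s).filter (fun a => univ.filter (fun i => a i ≠ c i) = Y) =
      Fintype.piFinset fun i => if i ∈ Y then (s i).erase (c i) else {c i} := by
    ext a
    simp only [mem_filter, Fintype.mem_piFinset, Finset.ext_iff, mem_univ, true_and]
    grind
  have hG : ∀ a ∈ (Fintype.piFinset s).filter (fun a => univ.filter (fun i => a i ≠ c i) = Y),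
      (∏ i, w i (a i)) • G (univ.filter fun i => a i ≠ c i) = (∏ i, w i (a i)) • G Y :=
    fun a ha => by rw [(mem_filter.1 ha).2]
  rw [sum_congr rfl hG, ← sum_smul, hfiber, ← prod_univ_sum]
  congr 1
  refine prod_congr rfl fun i _ => ?_
  split_ifs <;> simp

theorem sum_piFinset_prod_smul_eq_zero (s : ι → Finset α) (w : ι → α → R) (i₀ : ι)
    (hw : ∑ u ∈ s i₀, w i₀ u = 0) (G : (ι → α) → M) (hG : ∀ a u, G (update a i₀ u) = G a) :
    ∑ a ∈ Fintype.piFinset s, (∏ i, w i (a i)) • G a = 0 := by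
  set Φ : (ι → α) → M := fun a => (∏ i ∈ univ.erase i₀, w i (a i)) • G a
  have hΦ : ∀ a u, Φ (update a i₀ u) = Φ a := fun a u => by
    simp only [Φ, hG]
    congr 1
    exact prod_congr rfl fun i hi => by rw [update_of_ne (ne_of_mem_erase hi)]
  have hfiber : ∀ u v, ∑ a ∈ Fintype.piFinset (update s i₀ {u}), Φ a =
      ∑ a ∈ Fintype.piFinset (update s i₀ {v}), Φ a := fun u v =>
    sum_nbij' (update · i₀ v) (update · i₀ u) (by grind) (by grind) (by grind) (by grind)
      (fun a _ => (hΦ a v).symm)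
  calc ∑ a ∈ Fintype.piFinset s, (∏ i, w i (a i)) • G a
      = ∑ u ∈ s i₀, ∑ a ∈ Fintype.piFinset (update s i₀ {u}), w i₀ u • Φ a := by
        rw [← sum_fiberwise_of_maps_to (g := fun a => a i₀)
          fun a ha => Fintype.mem_piFinset.1 ha i₀]
        refine sum_congr rfl fun u hu => ?_
        rw [Fintype.piFinset_update_singleton_eq_filter_piFinset_eq s i₀ hu]
        refine sum_congr rfl fun a ha => ?_
        rw [← (mem_filter.1 ha).2, ← mul_prod_erase univ _ (mem_univ i₀), mul_smul]
    _ = 0 := by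
        rcases (s i₀).eq_empty_or_nonempty with h | ⟨c, -⟩
        · rw [h, sum_empty]
        · simp_rw [← smul_sum, hfiber _ c, ← sum_smul, hw, zero_smul]

end Finset

section Chains

variable {T : Type*} [Lattice T] {n : ℕ}

theorem piB_eq_of_le_of_forall [Fintype T] [BoundedOrder T] {b : Fin (n + 1) → T}
    {htop : b (Fin.last n) = ⊤} {t : T} {h : Fin (n + 1)} (hth : t ≤ b h)
    (hmin : ∀ j, t ≤ b j → h ≤ j) : piB b htop t = h :=
  le_antisymm (min'_le _ h (by simpa using hth))
    (le_min' _ _ _ fun j hj => hmin j (by simpa using hj))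

theorem piB_comp_jAB [Fintype T] [BoundedOrder T] {b : Fin (n + 1) → T} (hb : StrictMono b)
    (htop : b (Fin.last n) = ⊤) {a : Fin n → T}
    (ha : ∀ i, b i.castSucc ≤ a i ∧ a i ≤ b i.succ) :
    piB b htop ∘ jAB a = rhoY (univ.filter fun i => a i ≠ b i.castSucc) := by
  funext h
  induction h using Fin.cases with
  | zero => exact piB_eq_of_le_of_forall bot_le fun j _ => Fin.zero_le j
  | succ i =>
    simp only [comp_apply, jAB, rhoY, Fin.cases_succ, mem_filter, mem_univ, true_and]
    split_ifs with hai
    · refine piB_eq_of_le_of_forall (ha i).2 fun j hj => ?_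
      by_contra! hji
      exact hai (le_antisymm (hj.trans (hb.monotone (Fin.le_castSucc_iff.2 hji))) (ha i).1)
    · rw [not_not.1 hai]
      exact piB_eq_of_le_of_forall le_rfl fun j hj => hb.le_iff_le.1 hj

theorem rhoY_univ : rhoY (univ : Finset (Fin n)) = id := by
  funext h
  induction h using Fin.cases <;> simp [rhoY]

theorem jAB_update_of_ne [OrderBot T] (a : Fin n → T) (u : T) {i₀ : Fin n} {h : Fin (n + 1)}
    (hh : h ≠ i₀.succ) : jAB (update a i₀ u) h = jAB a h := by
  induction h using Fin.cases with
  | zero => rfl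
  | succ j =>
    simp only [jAB, Fin.cases_succ]
    exact update_of_ne (fun hj => hh (congrArg Fin.succ hj)) u a

theorem exists_jAB_update_comp_rhoY_eq [OrderBot T] {Y : Finset (Fin n)} (hY : Y ≠ univ) :
    ∃ i₀, ∀ (a : Fin n → T) u, jAB (update a i₀ u) ∘ rhoY Y = jAB a ∘ rhoY Y := by
  have hne : Yᶜ.Nonempty := by
    obtain ⟨i, hi⟩ := not_forall.1 (mt eq_univ_iff_forall.2 hY)
    exact ⟨i, mem_compl.2 hi⟩
  set i₀ := Yᶜ.max' hne
  have hi₀ : i₀ ∉ Y := mem_compl.1 (Yᶜ.max'_mem hne)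
  have hrho : ∀ h, rhoY Y h ≠ i₀.succ := fun h => by
    induction h using Fin.cases with
    | zero => exact (Fin.succ_ne_zero i₀).symm
    | succ i =>
      simp only [rhoY, Fin.cases_succ]
      split_ifs with hi
      · exact fun heq => hi₀ (Fin.succ_injective _ heq ▸ hi)
      · have : i ≤ i₀ := le_max' _ i (mem_compl.2 hi)
        exact fun heq => by simp [Fin.ext_iff] at heq; omega
  exact ⟨i₀, fun a u => funext fun h => jAB_update_of_ne a u (hrho h)⟩

end Chains

section MobiusSums

variable {T : Type*} [Lattice T] [Fintype T] [LocallyFiniteOrder T] {n : ℕ} {μ : T → T → ℤ}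
  {b : Fin (n + 1) → T} {M : Type*} [AddCommGroup M]

theorem sum_muBA_smul_piB_comp_jAB [BoundedOrder T] (hμ1 : ∀ t, μ t t = 1)
    (hμ2 : ∀ s t, s < t → ∑ u ∈ Icc s t, μ u t = 0) (hb : StrictMono b)
    (htop : b (Fin.last n) = ⊤) (F : (Fin (n + 1) → Fin (n + 1)) → M) :
    ∑ a ∈ Fintype.piFinset (fun i => Icc (b i.castSucc) (b i.succ)),
        muBA μ b a • F (piB b htop ∘ jAB a) =
      ∑ Y : Finset (Fin n), (-1 : ℤ) ^ #Y • F (rhoY Y) := by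
  have hlt : ∀ i : Fin n, b i.castSucc < b i.succ := fun i => hb i.castSucc_lt_succ
  have hmem : ∀ i : Fin n, b i.castSucc ∈ Icc (b i.castSucc) (b i.succ) := fun i =>
    left_mem_Icc.2 (hlt i).le
  have hcoef : ∀ i : Fin n,
      ∑ u ∈ (Icc (b i.castSucc) (b i.succ)).erase (b i.castSucc), μ (b i.castSucc) u = -1 :=
    fun i => by
      rw [sum_erase_eq_sub (hmem i),
        IncidenceAlgebra.sum_Icc_left_eq_zero_of_sum_Icc_right μ hμ1 hμ2 (hlt i), hμ1, zero_sub]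
  calc _ = ∑ a ∈ Fintype.piFinset (fun i => Icc (b i.castSucc) (b i.succ)),
          (∏ i, μ (b i.castSucc) (a i)) • F (rhoY (univ.filter fun i => a i ≠ b i.castSucc)) :=
        sum_congr rfl fun a ha => by
          rw [piB_comp_jAB hb htop fun i => by simpa using Fintype.mem_piFinset.1 ha i]; rfl
    _ = _ := sum_piFinset_prod_smul_filter_ne _ _ hmem (fun i u => μ (b i.castSucc) u)
          fun Y => F (rhoY Y)
    _ = _ := sum_congr rfl fun Y _ => by
          simp only [hcoef, hμ1, prod_ite_mem, univ_inter, prod_const]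

theorem sum_muBA_smul_jAB_comp_rhoY_eq_zero [OrderBot T] (hμ1 : ∀ t, μ t t = 1)
    (hμ2 : ∀ s t, s < t → ∑ u ∈ Icc s t, μ u t = 0) (hb : StrictMono b) {Y : Finset (Fin n)}
    (hY : Y ≠ univ) (F : (Fin (n + 1) → T) → M) :
    ∑ a ∈ Fintype.piFinset (fun i => Icc (b i.castSucc) (b i.succ)),
        muBA μ b a • F (jAB a ∘ rhoY Y) = 0 := by
  obtain ⟨i₀, hi₀⟩ := exists_jAB_update_comp_rhoY_eq (T := T) hY
  exact sum_piFinset_prod_smul_eq_zero (fun i => Icc (b i.castSucc) (b i.succ))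
    (fun i u => μ (b i.castSucc) u) i₀
    (IncidenceAlgebra.sum_Icc_left_eq_zero_of_sum_Icc_right μ hμ1 hμ2 (hb i₀.castSucc_lt_succ))
    (fun a => F (jAB a ∘ rhoY Y)) fun a u => congrArg F (hi₀ a u)

end MobiusSums

theorem isIdempotentElem_neg_one_pow_zsmul {A : Type*} [Ring A] {x : A} {n : ℕ}
    (h : x * x = (-1 : ℤ) ^ n • x) : IsIdempotentElem ((-1 : ℤ) ^ n • x) := by
  rw [IsIdempotentElem, smul_mul_smul_comm, h, smul_smul, ← mul_pow, neg_one_mul, neg_neg,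
    one_pow, one_mul]

theorem MonoidAlgebra.single_comp_mul_single {k T : Type*} [Semiring k] (f g : T → T) (r s : k) :
    single (M := Function.End T) f r * single (M := Function.End T) g s =
      single (M := Function.End T) (f ∘ g) (r * s) :=
  single_mul_single (M := Function.End T) f g r s

section IdempotentSum

variable (k : Type*) [Ring k] {T : Type*} [Lattice T] [Fintype T] [BoundedOrder T]
  [LocallyFiniteOrder T] {n : ℕ} (μ : T → T → ℤ) (b : Fin (n + 1) → T)
  (htop : b (Fin.last n) = ⊤)

noncomputable def sumJABCompPiB : MonoidAlgebra k (Function.End T) :=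
  ∑ a ∈ Fintype.piFinset (fun i => Icc (b i.castSucc) (b i.succ)),
    muBA μ b a • MonoidAlgebra.single (M := Function.End T) (jAB a ∘ piB b htop) (1 : k)

variable {k μ b}

theorem sumJABCompPiB_mul_self (hμ1 : ∀ t, μ t t = 1)
    (hμ2 : ∀ s t, s < t → ∑ u ∈ Icc s t, μ u t = 0) (hb : StrictMono b) :
    sumJABCompPiB k μ b htop * sumJABCompPiB k μ b htop =
      (-1 : ℤ) ^ n • sumJABCompPiB k μ b htop := by
  set P := Fintype.piFinset (fun i : Fin n => Icc (b i.castSucc) (b i.succ))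
  let e : (Fin (n + 1) → T) → MonoidAlgebra k (Function.End T) := fun f =>
    MonoidAlgebra.single (M := Function.End T) (f ∘ piB b htop) 1
  calc sumJABCompPiB k μ b htop * sumJABCompPiB k μ b htop
      = ∑ a ∈ P, muBA μ b a • ∑ a' ∈ P, muBA μ b a' • e (jAB a ∘ (piB b htop ∘ jAB a')) := by
        simp only [sumJABCompPiB, sum_mul_sum, smul_sum, smul_mul_smul_comm, smul_smul,
          MonoidAlgebra.single_comp_mul_single, mul_one]
        rfl
    _ = ∑ a ∈ P, muBA μ b a • ∑ Y : Finset (Fin n), (-1 : ℤ) ^ #Y • e (jAB a ∘ rhoY Y) := by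
        refine sum_congr rfl fun a _ => congrArg _ ?_
        exact sum_muBA_smul_piB_comp_jAB hμ1 hμ2 hb htop fun g => e (jAB a ∘ g)
    _ = ∑ Y : Finset (Fin n), (-1 : ℤ) ^ #Y • ∑ a ∈ P, muBA μ b a • e (jAB a ∘ rhoY Y) := by
        simp only [smul_sum]
        rw [sum_comm]
        simp only [smul_comm (muBA μ b _)]
    _ = (-1 : ℤ) ^ n • sumJABCompPiB k μ b htop := by
        rw [sum_eq_single_of_mem univ (mem_univ _) fun Y _ hY => by
          rw [sum_muBA_smul_jAB_comp_rhoY_eq_zero hμ1 hμ2 hb hY e, smul_zero],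
          rhoY_univ, card_univ, Fintype.card_fin]
        rfl

end IdempotentSum

/-- The free module and the monoid algebra on join-preserving maps are modelled by those on all
maps: every map occurring here is join-preserving, and composition is the same. -/
theorem piB_jAB_identities (k : Type) [CommRing k]
    (T : Type) [Lattice T] [Fintype T] [BoundedOrder T]
    (μ : T → T → ℤ) (hμ1 : ∀ t : T, μ t t = 1)
    (hμ2 : ∀ s t : T, s < t →
      ∑ u ∈ Finset.univ.filter (fun u : T => s ≤ u ∧ u ≤ t), μ u t = 0)
    (n : ℕ) (b : Fin (n + 1) → T) (hb : StrictMono b) (htop : b (Fin.last n) = ⊤) :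
    ((∑ a ∈ Finset.univ.filter
          (fun a : Fin n → T => ∀ i : Fin n, b i.castSucc ≤ a i ∧ a i ≤ b i.succ),
        muBA μ b a • Finsupp.single (piB b htop ∘ jAB a) (1 : k)) =
      ∑ Y : Finset (Fin n),
        ((-1 : ℤ) ^ Y.card) • Finsupp.single (rhoY Y) (1 : k)) ∧
    IsIdempotentElem
      (((-1 : ℤ) ^ n) • ∑ a ∈ Finset.univ.filter
          (fun a : Fin n → T => ∀ i : Fin n, b i.castSucc ≤ a i ∧ a i ≤ b i.succ),
        muBA μ b a •
          MonoidAlgebra.single (M := Function.End T) (jAB a ∘ piB b htop) (1 : k)) := by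
  let _ : LocallyFiniteOrder T := Fintype.toLocallyFiniteOrder
  have hIcc : ∀ s t : T, univ.filter (fun u => s ≤ u ∧ u ≤ t) = Icc s t := fun s t => by
    ext; simp
  have hchains : univ.filter (fun a : Fin n → T => ∀ i, b i.castSucc ≤ a i ∧ a i ≤ b i.succ) =
      Fintype.piFinset fun i => Icc (b i.castSucc) (b i.succ) := by
    ext; simp
  simp only [hIcc] at hμ2
  rw [hchains]
  exact ⟨sum_muBA_smul_piB_comp_jAB hμ1 hμ2 hb htop fun g => Finsupp.single g (1 : k),
    isIdempotentElem_neg_one_pow_zsmul (sumJABCompPiB_mul_self htop hμ1 hμ2 hb)⟩
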